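/- Let Ω ⊆ ℝ² be open, f : Ω → ℝ a C² function, and b : Ω → ℝ a continuous function such that Δf(x) ≥ b(x) · ∂f/∂s(x) for all x ∈ Ω (where (s,t) are the coordinates on ℝ²). Then f has no strict local maximum in Ω: there is no point x₀ ∈ Ω and radius ρ > 0 with the closed ball B(x₀,ρ) ⊆ Ω such that f(x) < f(x₀) for all x ∈ B(x₀,ρ) ∖ {x₀}. -/

import Mathlib

noncomputable section

/-- The Euclidean plane `ℝ²` with coordinates `(s, t)`. -/
abbrev E2 := EuclideanSpace ℝ (Fin 2)

/-- The coordinate direction `∂/∂s` in `ℝ²`. -/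
def es : E2 := EuclideanSpace.single 0 (1 : ℝ)

/-- The coordinate direction `∂/∂t` in `ℝ²`. -/
def et : E2 := EuclideanSpace.single 1 (1 : ℝ)

/-- The partial derivative `∂f/∂s`. -/
def pds (f : E2 → ℝ) (x : E2) : ℝ :=
  fderiv ℝ f x es

/-- The Euclidean Laplacian `Δf = ∂²f/∂s² + ∂²f/∂t²` on `ℝ²`. -/
def lap2 (f : E2 → ℝ) (x : E2) : ℝ :=
  fderiv ℝ (fderiv ℝ f) x es es + fderiv ℝ (fderiv ℝ f) x et et

open Filter Topology

/-- At a local max at `0`, a second derivative is nonpositive. -/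
lemma key1d {φ ψ : ℝ → ℝ} {d : ℝ} (hmax : IsLocalMax φ 0)
    (hφψ : ∀ᶠ r in nhds (0:ℝ), HasDerivAt φ (ψ r) r)
    (hd : HasDerivAt ψ d 0) : d ≤ 0 := by
  by_contra hpos
  push_neg at hpos
  have hψ0 : ψ 0 = 0 := hmax.hasDerivAt_eq_zero hφψ.self_of_nhds
  -- eventually ψ r > 0 for r > 0 small
  have hslope : Tendsto (fun r => ψ r / r) (𝓝[≠] (0:ℝ)) (𝓝 d) := by
    have h2 := hasDerivAt_iff_tendsto_slope.mp hd
    have : slope ψ 0 = fun r => ψ r / r := by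
      funext r; simp [slope_def_field, hψ0]
    rwa [this] at h2
  have hev : ∀ᶠ r in 𝓝[≠] (0:ℝ), 0 < ψ r / r :=
    hslope.eventually (eventually_gt_nhds hpos)
  have hev' : ∀ᶠ r in 𝓝[>] (0:ℝ), 0 < ψ r := by
    filter_upwards [nhdsWithin_mono 0 (fun x hx => ne_of_gt hx) hev,
      self_mem_nhdsWithin] with r h1 (h2 : 0 < r)
    have := mul_pos h1 h2
    rwa [div_mul_cancel₀] at this
    exact ne_of_gt h2
  -- get a radius
  obtain ⟨ε, hε, hball⟩ := Metric.eventually_nhds_iff.mp (hφψ.and hmax)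
  obtain ⟨u, hu, hIoc⟩ := mem_nhdsGT_iff_exists_Ioc_subset.mp hev'
  set ρ := min (ε/2) u with hρ
  have hρ0 : 0 < ρ := lt_min (by linarith) hu
  have hmem : ∀ r ∈ Set.Icc (0:ℝ) ρ, HasDerivAt φ (ψ r) r ∧ φ r ≤ φ 0 := by
    intro r hr
    apply hball
    have : |r| ≤ ρ := by
      rw [abs_of_nonneg hr.1]; exact hr.2
    calc dist r 0 = |r| := by simp [Real.dist_eq]
      _ ≤ ρ := this
      _ < ε := lt_of_le_of_lt (min_le_left _ _) (by linarith)
  have hmono : StrictMonoOn φ (Set.Icc 0 ρ) := by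
    apply strictMonoOn_of_deriv_pos (convex_Icc 0 ρ)
    · exact fun r hr => ((hmem r hr).1).continuousAt.continuousWithinAt
    · intro r hr
      rw [interior_Icc] at hr
      rw [((hmem r ⟨le_of_lt hr.1, le_of_lt hr.2⟩).1).deriv]
      exact hIoc ⟨hr.1, le_trans (le_of_lt hr.2) (min_le_right _ _)⟩
  have := hmono (Set.left_mem_Icc.2 (le_of_lt hρ0)) (Set.right_mem_Icc.2 (le_of_lt hρ0)) hρ0
  exact absurd ((hmem ρ (Set.right_mem_Icc.2 (le_of_lt hρ0))).2) (not_le.mpr this)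
open Filter Topology

lemma curve_hasDerivAt (y v : E2) (r : ℝ) : HasDerivAt (fun r : ℝ => y + r • v) v r := by
  simpa using ((hasDerivAt_id r).smul_const v).const_add y

lemma second_dir_deriv (f : E2 → ℝ) (y v : E2)
    (hF : DifferentiableAt ℝ (fderiv ℝ f) y) :
    HasDerivAt (fun r : ℝ => fderiv ℝ f (y + r • v) v)
      (fderiv ℝ (fderiv ℝ f) y v v) 0 := by
  have h1 : HasFDerivAt (fun x => fderiv ℝ f x v)
      ((ContinuousLinearMap.apply ℝ ℝ v).comp (fderiv ℝ (fderiv ℝ f) y)) y :=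
    (ContinuousLinearMap.apply ℝ ℝ v).hasFDerivAt.comp y hF.hasFDerivAt
  have h1' : HasFDerivAt (fun x => fderiv ℝ f x v)
      ((ContinuousLinearMap.apply ℝ ℝ v).comp (fderiv ℝ (fderiv ℝ f) y)) (y + (0:ℝ) • v) := by
    simpa using h1
  have h2 := h1'.comp_hasDerivAt (0:ℝ) (by exact curve_hasDerivAt y v 0)
  simpa [Function.comp_def] using h2

set_option maxHeartbeats 1000000

/-- Strong maximum principle for the elliptic inequality `Δf ≥ b · ∂f/∂s` with
continuous drift coefficient `b` and no zero order term: a C² solution on an open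
set `Ω ⊆ ℝ²` has no strict local maximum in `Ω`. -/
theorem elliptic_inequality_no_strict_local_max
    (Ω : Set E2) (hΩ : IsOpen Ω) (f : E2 → ℝ) (hf : ContDiffOn ℝ 2 f Ω)
    (b : E2 → ℝ) (hb : ContinuousOn b Ω)
    (hineq : ∀ x ∈ Ω, b x * pds f x ≤ lap2 f x) :
    ¬ ∃ x₀ ∈ Ω, ∃ ρ > (0 : ℝ), Metric.closedBall x₀ ρ ⊆ Ω ∧
        ∀ x ∈ Metric.closedBall x₀ ρ \ {x₀}, f x < f x₀ := by
  rintro ⟨x₀, hx₀, ρ, hρ, hball, hmax⟩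
  set K := Metric.closedBall x₀ ρ with hKdef
  have hK : IsCompact K := isCompact_closedBall _ _
  have hx₀K : x₀ ∈ K := Metric.mem_closedBall_self (le_of_lt hρ)
  obtain ⟨M, hM⟩ := hK.exists_bound_of_continuousOn (hb.mono hball)
  set α : ℝ := max M 0 + 1 with hαdef
  have hα1 : 1 ≤ α := le_add_of_nonneg_left (le_max_right M 0)
  have hα0 : 0 < α := lt_of_lt_of_le one_pos hα1
  have hαb : ∀ x ∈ K, b x + 1 ≤ α := by
    intro x hx
    have h1 : b x ≤ M := le_trans (le_abs_self _) (by simpa using hM x hx)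
    have : M ≤ max M 0 := le_max_left _ _
    linarith
  set l : E2 →L[ℝ] ℝ := EuclideanSpace.proj (0 : Fin 2) with hldef
  set h : E2 → ℝ := fun x => Real.exp (α * x 0) with hhdef
  have hhpos : ∀ x, 0 < h x := fun x => Real.exp_pos _
  have hcont_h : Continuous h := by
    have : Continuous fun x : E2 => α * l x := continuous_const.mul l.continuous
    exact Real.continuous_exp.comp (by simpa [hldef] using this)
  have hh : ∀ x : E2, HasFDerivAt h (Real.exp (α * x 0) • (α • l)) x := by
    intro x
    have h1 : HasFDerivAt (fun x : E2 => α * l x) (α • l) x := l.hasFDerivAt.const_mul α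
    have := h1.exp
    simpa [hldef, hhdef] using this
  -- sup of f on the sphere
  set S := Metric.sphere x₀ ρ with hSdef
  have hSn : S.Nonempty := NormedSpace.sphere_nonempty.mpr (le_of_lt hρ)
  have hSK : S ⊆ K := Metric.sphere_subset_closedBall
  have hfc : ContinuousOn f K := (hf.continuousOn).mono hball
  obtain ⟨z₀, hz₀S, hz₀max⟩ := (isCompact_sphere x₀ ρ).exists_isMaxOn hSn (hfc.mono hSK)
  have hm : f z₀ < f x₀ := by
    apply hmax z₀
    have hd : dist z₀ x₀ = ρ := hz₀S
    refine ⟨hSK hz₀S, fun hz => ?_⟩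
    rw [Set.mem_singleton_iff] at hz
    rw [hz, dist_self] at hd
    exact absurd hd.symm (ne_of_gt hρ)
  set δ : ℝ := f x₀ - f z₀ with hδdef
  have hδ : 0 < δ := by rw [hδdef]; linarith
  -- sup of h on K
  obtain ⟨z₁, _, hz₁max⟩ := hK.exists_isMaxOn ⟨x₀, hx₀K⟩ hcont_h.continuousOn
  set C : ℝ := h z₁ with hCdef
  have hC : 0 < C := hhpos _
  set ε : ℝ := δ / (2 * C) with hεdef
  have hε : 0 < ε := by positivity
  set g : E2 → ℝ := fun x => f x + ε * h x with hgdef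
  have hgc : ContinuousOn g K := hfc.add (continuous_const.mul hcont_h).continuousOn
  obtain ⟨y, hyK, hymax⟩ := hK.exists_isMaxOn ⟨x₀, hx₀K⟩ hgc
  -- y is an interior point
  have hgx₀y : g x₀ ≤ g y := hymax hx₀K
  have hySlt : ∀ z ∈ S, g z < g y := by
    intro z hz
    have h1 : f z ≤ f z₀ := hz₀max hz
    have h2 : h z ≤ C := hz₁max (hSK hz)
    have h3 : ε * h z ≤ ε * C := mul_le_mul_of_nonneg_left h2 (le_of_lt hε)
    have h4 : ε * C = δ / 2 := by
      field_simp [hεdef]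
      rw [hεdef, div_mul_eq_mul_div, div_mul_eq_mul_div, div_eq_iff (mul_ne_zero two_ne_zero hC.ne')]
      ring
    have h5 : 0 < ε * h x₀ := mul_pos hε (hhpos _)
    have hgz : g z = f z + ε * h z := rfl
    have hgx₀ : g x₀ = f x₀ + ε * h x₀ := rfl
    have hδeq : δ = f x₀ - f z₀ := rfl
    linarith
  have hyint : dist y x₀ < ρ := by
    rcases lt_or_eq_of_le (Metric.mem_closedBall.mp hyK) with h1 | h1
    · exact h1
    · exact absurd (hySlt y (Metric.mem_sphere.mpr h1)) (lt_irrefl _)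
  have hyΩ : y ∈ Ω := hball hyK
  have hloc : IsLocalMax g y := by
    have hb1 : Metric.ball x₀ ρ ∈ 𝓝 y :=
      (Metric.isOpen_ball).mem_nhds (Metric.mem_ball.mpr hyint)
    filter_upwards [hb1] with x hx
    exact hymax (Metric.ball_subset_closedBall hx)
  -- differentiability facts
  have hfy : ContDiffAt ℝ 2 f y := hf.contDiffAt (hΩ.mem_nhds hyΩ)
  have hF : DifferentiableAt ℝ (fderiv ℝ f) y :=
    (hfy.fderiv_right (m := 1) (by norm_num)).differentiableAt (by norm_num)
  have hfdiff : ∀ᶠ x in 𝓝 y, DifferentiableAt ℝ f x := by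
    filter_upwards [hΩ.mem_nhds hyΩ] with x hx
    exact (hf.contDiffAt (hΩ.mem_nhds hx)).differentiableAt (by norm_num)
  set E : ℝ := Real.exp (α * y 0) with hEdef
  have hE : 0 < E := Real.exp_pos _
  -- first order condition
  have hg' : HasFDerivAt g (fderiv ℝ f y + (ε * E) • (α • l)) y := by
    have h1 := (hfy.differentiableAt (by norm_num)).hasFDerivAt
    have h2 := (hh y).const_mul ε
    have := h1.add h2
    exact this.congr_fderiv (by simp [hEdef, smul_smul, mul_assoc])
  have h0 := hloc.hasFDerivAt_eq_zero hg'
  have hles : l es = 1 := by simp [hldef, es]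
  have hlet : l et = 0 := by simp [hldef, et]
  have hpds : fderiv ℝ f y es = -(ε * E * α) := by
    have := congrArg (fun (L : E2 →L[ℝ] ℝ) => L es) h0
    simp [hles] at this
    linarith
  -- second order conditions
  -- direction es
  have hcoord_es : ∀ r : ℝ, (y + r • es) 0 = y 0 + r := by
    intro r; simp [es]
  have hcoord_et : ∀ r : ℝ, (y + r • et) 0 = y 0 := by
    intro r; simp [et]
  have hsecond : ∀ v : E2, (∀ r : ℝ, (y + r • v) 0 = y 0 + r * l v) →
      fderiv ℝ (fderiv ℝ f) y v v + ε * (E * (α * l v) * (α * l v)) ≤ 0 := by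
    intro v hcoord
    have hctend : Tendsto (fun r : ℝ => y + r • v) (𝓝 0) (𝓝 y) := by
      have := (curve_hasDerivAt y v 0).continuousAt.tendsto
      simpa using this
    have hmaxφ : IsLocalMax (fun r : ℝ => g (y + r • v)) 0 := by
      have h1 := hctend.eventually hloc
      show ∀ᶠ r in 𝓝 (0:ℝ), g (y + r • v) ≤ g (y + (0:ℝ) • v)
      have h2 : y + (0:ℝ) • v = y := by simp
      rw [h2]
      exact h1
    have hφψ : ∀ᶠ r in 𝓝 (0:ℝ), HasDerivAt (fun r : ℝ => g (y + r • v))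
        (fderiv ℝ f (y + r • v) v + ε * (Real.exp (α * (y 0 + r * l v)) * (α * l v))) r := by
      filter_upwards [hctend.eventually hfdiff] with r hdr
      have h1 : HasDerivAt (fun r : ℝ => f (y + r • v)) (fderiv ℝ f (y + r • v) v) r := by
        have := hdr.hasFDerivAt.comp_hasDerivAt r (curve_hasDerivAt y v r)
        simpa [Function.comp_def] using this
      have h2 : HasDerivAt (fun r : ℝ => ε * Real.exp (α * (y 0 + r * l v)))
          (ε * (Real.exp (α * (y 0 + r * l v)) * (α * l v))) r := by
        have hu : HasDerivAt (fun r : ℝ => α * (y 0 + r * l v)) (α * l v) r := by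
          have := (((hasDerivAt_id r).mul_const (l v)).const_add (y 0)).const_mul α
          simpa using this
        exact hu.exp.const_mul ε
      have h3 := h1.add h2
      have heq : (fun r : ℝ => g (y + r • v)) =
          fun r : ℝ => f (y + r • v) + ε * Real.exp (α * (y 0 + r * l v)) := by
        funext r
        simp only [hgdef, hhdef]
        rw [hcoord r]
      rw [heq]
      exact h3
    have hψd : HasDerivAt (fun r : ℝ => fderiv ℝ f (y + r • v) v +
        ε * (Real.exp (α * (y 0 + r * l v)) * (α * l v)))
        (fderiv ℝ (fderiv ℝ f) y v v + ε * (E * (α * l v) * (α * l v))) 0 := by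
      have h1 := second_dir_deriv f y v hF
      have h2 : HasDerivAt (fun r : ℝ => ε * (Real.exp (α * (y 0 + r * l v)) * (α * l v)))
          (ε * (E * (α * l v) * (α * l v))) 0 := by
        have hu : HasDerivAt (fun r : ℝ => α * (y 0 + r * l v)) (α * l v) 0 := by
          have := (((hasDerivAt_id (0:ℝ)).mul_const (l v)).const_add (y 0)).const_mul α
          simpa using this
        have h3 := (hu.exp.mul_const (α * l v)).const_mul ε
        have h4 : Real.exp (α * (y 0 + 0 * l v)) = E := by
          simp [hEdef]
        rw [h4] at h3
        exact h3
      exact h1.add h2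
    exact key1d hmaxφ hφψ hψd
  have hsec_es : fderiv ℝ (fderiv ℝ f) y es es + ε * (E * α * α) ≤ 0 := by
    have := hsecond es (by intro r; rw [hcoord_es r, hles]; ring)
    rw [hles] at this
    calc fderiv ℝ (fderiv ℝ f) y es es + ε * (E * α * α)
        = fderiv ℝ (fderiv ℝ f) y es es + ε * (E * (α * 1) * (α * 1)) := by ring
      _ ≤ 0 := this
  have hsec_et : fderiv ℝ (fderiv ℝ f) y et et ≤ 0 := by
    have := hsecond et (by intro r; rw [hcoord_et r, hlet]; ring)
    rw [hlet] at this
    calc fderiv ℝ (fderiv ℝ f) y et et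
        = fderiv ℝ (fderiv ℝ f) y et et + ε * (E * (α * 0) * (α * 0)) := by ring
      _ ≤ 0 := this
  -- conclude
  have hin := hineq y hyΩ
  simp only [pds, lap2] at hin
  rw [hpds] at hin
  have hby : b y + 1 ≤ α := hαb y hyK
  nlinarith [mul_pos (mul_pos hε hE) hα0, mul_le_mul_of_nonneg_left hby
    (le_of_lt (mul_pos (mul_pos hε hE) hα0))]
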